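/- There exist universal constants c₀ ∈ (0,1) and δ₀ ∈ (0, 0.05] such that the following holds. Let α ∈ (0,1), c ∈ (0, c₀], and δ ∈ (0, δ₀], and let σ_T > 0 satisfy c·σ_T ≤ α/√(ln(1/δ)). Set a = 1 − 10α/c, b = 1 + α + 10α/c, s = c·σ_T, and let ν be the trapezoid density with parameters (a, α, b). Then for every measurable Ψ : ℝ → [−1,1] with Err_s(Ψ) ≤ δ and every x ∈ [0, α]: ∫_{a+x}^{1−x} Ψ(w) dw ≤ −0.1·(1−a) and ∫_{1+α+x}^{b−x} Ψ(w) dw ≥ 0.1·(b−(1+α)). -/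

import Mathlib

open MeasureTheory

/-- The density `φ_{0,s²}` of the centered Gaussian with standard deviation `s`. -/
noncomputable def gaussPdf (s x : ℝ) : ℝ :=
  (1 / (s * Real.sqrt (2 * Real.pi))) * Real.exp (-x ^ 2 / (2 * s ^ 2))

/-- The trapezoid density with parameters `(a, α, b)` (where `a < 1 < 1+α < b`):
`C·(w−a)/(1−a)` on `[a,1]`, `C` on `(1, 1+α)`, `C·(b−w)/(b−1−α)` on `[1+α, b]`,
`0` outside `[a,b]`, with `C = 2/(b−a+α)`. -/
noncomputable def trapPdf (a α b w : ℝ) : ℝ :=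
  if w < a then 0
  else if w ≤ 1 then (2 / (b - a + α)) * (w - a) / (1 - a)
  else if w < 1 + α then 2 / (b - a + α)
  else if w ≤ b then (2 / (b - a + α)) * (b - w) / (b - 1 - α)
  else 0

/-- The error rate of `Ψ : ℝ → [−1,1]` for the `(1,α)`-signal gap problem at Gaussian
deviation scale `s`, with trapezoid signal density `ν` of parameters `(a, α, b)`. -/
noncomputable def errRate (a α b s : ℝ) (Ψ : ℝ → ℝ) : ℝ :=
  (∫ w in a..1, (∫ x : ℝ, ((Ψ (w + x) + 1) / 2) * gaussPdf s x) * trapPdf a α b w) +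
  (∫ w in (1 + α)..b, (∫ x : ℝ, ((1 - Ψ (w + x)) / 2) * gaussPdf s x) * trapPdf a α b w)

set_option maxHeartbeats 1000000

section Aux
open Set

lemma gaussPdf_nonneg {s : ℝ} (hs : 0 < s) (x : ℝ) : 0 ≤ gaussPdf s x := by
  unfold gaussPdf; positivity

lemma gaussPdf_neg (s x : ℝ) : gaussPdf s (-x) = gaussPdf s x := by
  simp [gaussPdf, neg_sq]

lemma gaussPdf_le {s : ℝ} (hs : 0 < s) (x : ℝ) :
    gaussPdf s x ≤ 1 / (s * Real.sqrt (2 * Real.pi)) := by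
  have h2 : Real.exp (-x ^ 2 / (2 * s ^ 2)) ≤ 1 := by
    rw [Real.exp_le_one_iff, neg_div]
    exact neg_nonpos.2 (by positivity)
  have h3 : (0:ℝ) < 1 / (s * Real.sqrt (2 * Real.pi)) := by
    have := Real.sqrt_pos.2 (by positivity : (0:ℝ) < 2 * Real.pi)
    positivity
  calc gaussPdf s x ≤ (1 / (s * Real.sqrt (2 * Real.pi))) * 1 := by
        unfold gaussPdf
        exact mul_le_mul_of_nonneg_left h2 (le_of_lt h3)
    _ = _ := mul_one _

lemma measurable_gaussPdf (s : ℝ) : Measurable (gaussPdf s) := by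
  unfold gaussPdf; fun_prop

lemma integrable_gaussPdf {s : ℝ} (hs : 0 < s) : Integrable (gaussPdf s) := by
  have h : gaussPdf s = fun x => (1 / (s * Real.sqrt (2 * Real.pi))) *
      Real.exp (-(1/(2*s^2)) * x ^ 2) := by
    funext x; unfold gaussPdf; ring_nf
  rw [h]
  exact (integrable_exp_neg_mul_sq (by positivity)).const_mul _

lemma sqrt_two_pi_le : Real.sqrt (2 * Real.pi) ≤ 2.51 := by
  rw [show (2.51:ℝ) = Real.sqrt (2.51^2) from (Real.sqrt_sq (by norm_num)).symm]
  exact Real.sqrt_le_sqrt (by nlinarith [Real.pi_lt_d2])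

lemma exp_half_le : Real.exp (1/2) ≤ 5/3 := by
  nlinarith [Real.exp_one_lt_d9, Real.exp_pos (1/2:ℝ),
    (by rw [← Real.exp_add]; norm_num : Real.exp (1/2) * Real.exp (1/2) = Real.exp 1)]

lemma exp_neg_half_ge : (3/5 : ℝ) ≤ Real.exp (-(1/2)) := by
  have h := Real.exp_pos (1/2:ℝ)
  rw [Real.exp_neg, le_inv_comm₀ (by norm_num) h]
  calc Real.exp (1/2) ≤ 5/3 := exp_half_le
    _ = (3/5:ℝ)⁻¹ := by norm_num

lemma gauss_lower {s : ℝ} (hs : 0 < s) : (3/10 : ℝ) ≤ ∫ u in (-s)..s, gaussPdf s u := by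
  have hK : 0 < Real.sqrt (2 * Real.pi) := Real.sqrt_pos.2 (by positivity)
  have hpt : ∀ u ∈ Set.Icc (-s) s, (3/10 : ℝ)/(2*s) ≤ gaussPdf s u := by
    intro u hu
    have h1 : Real.exp (-(1/2)) ≤ Real.exp (-u^2/(2*s^2)) := by
      apply Real.exp_le_exp.2
      rw [neg_div, neg_le_neg_iff, div_le_div_iff₀ (by positivity) (by norm_num)]
      nlinarith [hu.1, hu.2]
    have h2 : (3/10 : ℝ)/(2*s) ≤ (1 / (s * Real.sqrt (2 * Real.pi))) * Real.exp (-(1/2)) := by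
      rw [one_div, inv_mul_eq_div, div_le_div_iff₀ (by positivity) (by positivity)]
      nlinarith [sqrt_two_pi_le, exp_neg_half_ge, hK, hs,
        mul_le_mul_of_nonneg_left sqrt_two_pi_le hs.le,
        mul_le_mul_of_nonneg_left exp_neg_half_ge hs.le]
    calc (3/10:ℝ)/(2*s) ≤ (1 / (s * Real.sqrt (2 * Real.pi))) * Real.exp (-(1/2)) := h2
      _ ≤ gaussPdf s u := mul_le_mul_of_nonneg_left h1 (by positivity)
  have hint : IntervalIntegrable (gaussPdf s) volume (-s) s := by
    have : Continuous (gaussPdf s) := by unfold gaussPdf; fun_prop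
    exact this.intervalIntegrable _ _
  calc (3/10:ℝ) = (s - (-s)) • ((3/10:ℝ)/(2*s)) := by
        rw [smul_eq_mul]; field_simp; ring
    _ = ∫ _ in (-s)..s, (3/10:ℝ)/(2*s) := (intervalIntegral.integral_const _).symm
    _ ≤ ∫ u in (-s)..s, gaussPdf s u := by
        apply intervalIntegral.integral_mono_on (by linarith) (intervalIntegrable_const) hint hpt

lemma intervalIntegrable_of_bdd {f : ℝ → ℝ} (hf : Measurable f) {M : ℝ}
    (hM : ∀ x, |f x| ≤ M) (p q : ℝ) : IntervalIntegrable f volume p q := by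
  constructor <;>
  exact Integrable.mono' (integrableOn_const (C := M) measure_Ioc_lt_top.ne)
    hf.aestronglyMeasurable.restrict (ae_of_all _ hM)

lemma integrable_mul_gauss {g : ℝ → ℝ} (hgm : Measurable g) (hg0 : ∀ y, 0 ≤ g y)
    (hg1 : ∀ y, g y ≤ 1) {s : ℝ} (hs : 0 < s) (w : ℝ) :
    Integrable (fun x => g (w + x) * gaussPdf s x) := by
  apply Integrable.mono' (integrable_gaussPdf hs)
    ((hgm.comp (measurable_const.add measurable_id)).mul (measurable_gaussPdf s)).aestronglyMeasurable
  refine ae_of_all _ fun x => ?_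
  show ‖g (w + x) * gaussPdf s x‖ ≤ gaussPdf s x
  rw [Real.norm_eq_abs, abs_mul, abs_of_nonneg (hg0 _), abs_of_nonneg (gaussPdf_nonneg hs _)]
  calc g (w + x) * gaussPdf s x ≤ 1 * gaussPdf s x :=
        mul_le_mul_of_nonneg_right (hg1 _) (gaussPdf_nonneg hs _)
    _ = _ := one_mul _

lemma measurable_smoothed {g : ℝ → ℝ} (hgm : Measurable g) (s : ℝ) :
    Measurable fun w => ∫ x, g (w + x) * gaussPdf s x := by
  have h : StronglyMeasurable (Function.uncurry fun w x => g (w + x) * gaussPdf s x) :=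
    ((hgm.comp (measurable_fst.add measurable_snd)).mul
      ((measurable_gaussPdf s).comp measurable_snd)).stronglyMeasurable
  exact h.integral_prod_right.measurable

lemma smoothed_nonneg {g : ℝ → ℝ} (hg0 : ∀ y, 0 ≤ g y) {s : ℝ} (hs : 0 < s) (w : ℝ) :
    0 ≤ ∫ x, g (w + x) * gaussPdf s x :=
  integral_nonneg fun x => mul_nonneg (hg0 _) (gaussPdf_nonneg hs _)

lemma smoothed_le {g : ℝ → ℝ} (hgm : Measurable g) (hg0 : ∀ y, 0 ≤ g y)
    (hg1 : ∀ y, g y ≤ 1) {s : ℝ} (hs : 0 < s) (w : ℝ) :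
    (∫ x, g (w + x) * gaussPdf s x) ≤ ∫ x, gaussPdf s x := by
  apply integral_mono (integrable_mul_gauss hgm hg0 hg1 hs w) (integrable_gaussPdf hs)
  intro x
  calc g (w + x) * gaussPdf s x ≤ 1 * gaussPdf s x :=
        mul_le_mul_of_nonneg_right (hg1 _) (gaussPdf_nonneg hs _)
    _ = _ := one_mul _

lemma key_smooth {g : ℝ → ℝ} (hgm : Measurable g) (hg0 : ∀ y, 0 ≤ g y) (hg1 : ∀ y, g y ≤ 1)
    {s : ℝ} (hs : 0 < s) {p q : ℝ} (hpq : p ≤ q) :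
    (∫ u in (-s)..s, gaussPdf s u) * (∫ w in p..q, g w) ≤
      ∫ w in (p - s)..(q + s), ∫ x, g (w + x) * gaussPdf s x := by
  set φ := gaussPdf s with hφ
  set S : Set ℝ := Ioc (-s) s with hS
  set J : Set ℝ := Ioc (p - s) (q + s) with hJ
  have hgabs : ∀ y, |g y| ≤ 1 := fun y => abs_le.2 ⟨by linarith [hg0 y], hg1 y⟩
  have hIIg : ∀ p' q' : ℝ, IntervalIntegrable g volume p' q' :=
    fun p' q' => intervalIntegrable_of_bdd hgm hgabs p' q'
  have hss : -s ≤ s := by linarith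
  have hJle : p - s ≤ q + s := by linarith
  have hK0 : 0 ≤ ∫ w in p..q, g w := intervalIntegral.integral_nonneg hpq fun u _ => hg0 u
  set K := ∫ w in p..q, g w with hKdef
  set F : ℝ → ℝ := fun u => ∫ w in J, g (w + u) with hF
  set Mφ := 1 / (s * Real.sqrt (2 * Real.pi)) with hMφ
  have hφ0 : ∀ u, 0 ≤ φ u := gaussPdf_nonneg hs
  have hφle : ∀ u, φ u ≤ Mφ := gaussPdf_le hs
  have hFmeas : Measurable F := by
    have h : StronglyMeasurable (Function.uncurry fun u w => g (w + u)) :=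
      (hgm.comp (measurable_snd.add measurable_fst)).stronglyMeasurable
    exact (h.integral_prod_right (ν := volume.restrict J)).measurable
  have hJvol : volume J < ⊤ := measure_Ioc_lt_top
  have hSvol : volume S < ⊤ := measure_Ioc_lt_top
  have hFbdd : ∀ u, |F u| ≤ 1 * (volume J).toReal := by
    intro u
    rw [← Real.norm_eq_abs]
    exact norm_setIntegral_le_of_norm_le_const hJvol
      (fun x _ => by rw [Real.norm_eq_abs]; exact hgabs _)
  have hKF : ∀ u ∈ S, K ≤ F u := by
    intro u hu
    have h1 : F u = ∫ w in (p - s + u)..(q + s + u), g w := by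
      simp only [hF, hJ]
      rw [← intervalIntegral.integral_of_le hJle, ← intervalIntegral.integral_comp_add_right g u]
    rw [h1, hKdef]
    exact intervalIntegral.integral_mono_interval (by linarith [hu.2])
      hpq (by linarith [hu.1.le]) (ae_of_all _ hg0) (hIIg _ _)
  have step1 : (∫ u in (-s)..s, φ u) * K = ∫ u in S, φ u * K := by
    rw [intervalIntegral.integral_of_le hss, ← integral_mul_const]
  have hIφK : IntegrableOn (fun u => φ u * K) S :=
    (intervalIntegrable_of_bdd ((measurable_gaussPdf s).mul_const K)
      (M := Mφ * |K|) (fun u => by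
        rw [abs_mul, abs_of_nonneg (hφ0 u)]
        exact mul_le_mul_of_nonneg_right (hφle u) (abs_nonneg _)) (-s) s).1
  have hIφF : IntegrableOn (fun u => φ u * F u) S :=
    (intervalIntegrable_of_bdd ((measurable_gaussPdf s).mul hFmeas)
      (M := Mφ * (1 * (volume J).toReal)) (fun u => by
        simp only [Pi.mul_apply]
        rw [abs_mul, abs_of_nonneg (hφ0 u)]
        exact mul_le_mul (hφle u) (hFbdd u) (abs_nonneg _)
          (le_trans (hφ0 u) (hφle u))) (-s) s).1
  have step2 : ∫ u in S, φ u * K ≤ ∫ u in S, φ u * F u := by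
    apply setIntegral_mono_on hIφK hIφF measurableSet_Ioc
    intro u hu
    exact mul_le_mul_of_nonneg_left (hKF u hu) (hφ0 u)
  have step3 : ∫ u in S, φ u * F u = ∫ u in S, ∫ w in J, g (w + u) * φ u := by
    apply integral_congr_ae (ae_of_all _ ?_)
    intro u
    simp only [hF]
    rw [integral_mul_const, mul_comm]
  haveI instS : IsFiniteMeasure (volume.restrict S) :=
    ⟨by rw [Measure.restrict_apply_univ]; exact hSvol⟩
  haveI instJ : IsFiniteMeasure (volume.restrict J) :=
    ⟨by rw [Measure.restrict_apply_univ]; exact hJvol⟩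
  have hprod : Integrable (Function.uncurry fun u w => g (w + u) * φ u)
      ((volume.restrict S).prod (volume.restrict J)) := by
    apply Integrable.mono' (integrable_const Mφ)
    · exact ((hgm.comp (measurable_snd.add measurable_fst)).mul
        ((measurable_gaussPdf s).comp measurable_fst)).aestronglyMeasurable
    · refine ae_of_all _ fun z => ?_
      show ‖g (z.2 + z.1) * φ z.1‖ ≤ Mφ
      rw [Real.norm_eq_abs, abs_mul, abs_of_nonneg (hg0 _), abs_of_nonneg (hφ0 _)]
      calc g (z.2 + z.1) * φ z.1 ≤ 1 * φ z.1 :=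
            mul_le_mul_of_nonneg_right (hg1 _) (hφ0 _)
        _ = φ z.1 := one_mul _
        _ ≤ Mφ := hφle _
  have step4 : ∫ u in S, ∫ w in J, g (w + u) * φ u = ∫ w in J, ∫ u in S, g (w + u) * φ u :=
    integral_integral_swap hprod
  have hinnerS_meas : Measurable fun w => ∫ u in S, g (w + u) * φ u := by
    have h : StronglyMeasurable (Function.uncurry fun w u => g (w + u) * φ u) :=
      ((hgm.comp (measurable_fst.add measurable_snd)).mul
        ((measurable_gaussPdf s).comp measurable_snd)).stronglyMeasurable
    exact (h.integral_prod_right (ν := volume.restrict S)).measurable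
  have hinnerS_bdd : ∀ w, |∫ u in S, g (w + u) * φ u| ≤ Mφ * (volume S).toReal := by
    intro w
    rw [← Real.norm_eq_abs]
    apply norm_setIntegral_le_of_norm_le_const hSvol
    intro u _
    rw [Real.norm_eq_abs, abs_mul, abs_of_nonneg (hg0 _), abs_of_nonneg (hφ0 _)]
    calc g (w + u) * φ u ≤ 1 * φ u := mul_le_mul_of_nonneg_right (hg1 _) (hφ0 _)
      _ = φ u := one_mul _
      _ ≤ Mφ := hφle _
  set B := ∫ x, φ x with hB
  have hPbdd : ∀ w, |∫ x, g (w + x) * φ x| ≤ B := by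
    intro w
    rw [abs_of_nonneg (smoothed_nonneg hg0 hs w)]
    exact smoothed_le hgm hg0 hg1 hs w
  have step5 : ∫ w in J, (∫ u in S, g (w + u) * φ u) ≤ ∫ w in J, ∫ x, g (w + x) * φ x := by
    apply setIntegral_mono_on
    · exact (intervalIntegrable_of_bdd hinnerS_meas hinnerS_bdd (p-s) (q+s)).1
    · exact (intervalIntegrable_of_bdd (measurable_smoothed hgm s) hPbdd (p-s) (q+s)).1
    · exact measurableSet_Ioc
    · intro w _
      apply setIntegral_le_integral (integrable_mul_gauss hgm hg0 hg1 hs w)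
      exact ae_of_all _ fun u => mul_nonneg (hg0 _) (hφ0 _)
  have step6 : ∫ w in J, (∫ x, g (w + x) * φ x) = ∫ w in (p-s)..(q+s), ∫ x, g (w + x) * φ x :=
    (intervalIntegral.integral_of_le hJle).symm
  calc (∫ u in (-s)..s, φ u) * K = ∫ u in S, φ u * K := step1
    _ ≤ ∫ u in S, φ u * F u := step2
    _ = ∫ u in S, ∫ w in J, g (w + u) * φ u := step3
    _ = ∫ w in J, ∫ u in S, g (w + u) * φ u := step4
    _ ≤ ∫ w in J, ∫ x, g (w + x) * φ x := step5
    _ = _ := step6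

lemma trapPdf_nonneg {a α b : ℝ} (ha : a < 1) (hα : 0 < α) (hb : 1 + α < b) (w : ℝ) :
    0 ≤ trapPdf a α b w := by
  have hC : (0:ℝ) ≤ 2 / (b - a + α) := div_nonneg (by norm_num) (by linarith)
  unfold trapPdf
  split_ifs with h1 h2 h3 h4
  · exact le_refl 0
  · exact div_nonneg (mul_nonneg hC (by linarith)) (by linarith)
  · exact hC
  · exact div_nonneg (mul_nonneg hC (by linarith)) (by linarith)
  · exact le_refl 0

lemma trapPdf_le {a α b : ℝ} (ha : a < 1) (hα : 0 < α) (hb : 1 + α < b) (w : ℝ) :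
    trapPdf a α b w ≤ 2 / (b - a + α) := by
  have hC : (0:ℝ) ≤ 2 / (b - a + α) := div_nonneg (by norm_num) (by linarith)
  unfold trapPdf
  split_ifs with h1 h2 h3 h4
  · exact hC
  · rw [div_le_iff₀ (by linarith : (0:ℝ) < 1 - a)]
    exact mul_le_mul_of_nonneg_left (by linarith) hC
  · exact le_refl _
  · rw [div_le_iff₀ (by linarith : (0:ℝ) < b - 1 - α)]
    exact mul_le_mul_of_nonneg_left (by linarith) hC
  · exact hC

lemma trapPdf_measurable (a α b : ℝ) : Measurable (trapPdf a α b) := by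
  unfold trapPdf
  refine Measurable.ite (measurableSet_lt measurable_id measurable_const) measurable_const ?_
  refine Measurable.ite (measurableSet_le measurable_id measurable_const) (by fun_prop) ?_
  refine Measurable.ite (measurableSet_lt measurable_id measurable_const) measurable_const ?_
  exact Measurable.ite (measurableSet_le measurable_id measurable_const) (by fun_prop)
    measurable_const

lemma trapPdf_ramp1 {a α b w : ℝ} (h1 : a ≤ w) (h2 : w ≤ 1) :
    trapPdf a α b w = (2 / (b - a + α)) * (w - a) / (1 - a) := by
  unfold trapPdf; rw [if_neg (not_lt.2 h1), if_pos h2]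

lemma trapPdf_symm {a α : ℝ} (ha : a < 1) (hα : 0 < α) (w : ℝ) :
    trapPdf a α (2 + α - a) (2 + α - w) = trapPdf a α (2 + α - a) w := by
  unfold trapPdf
  split_ifs <;> first | rfl | (exfalso; linarith) | ring1

lemma errRate_symm {a α b s : ℝ} (ha : a < 1) (hα : 0 < α) (hb : b = 2 + α - a) (Ψ : ℝ → ℝ) :
    errRate a α b s (fun y => -Ψ (2 + α - y)) = errRate a α b s Ψ := by
  have hsym : ∀ w, trapPdf a α b (2 + α - w) = trapPdf a α b w := by
    subst hb; exact trapPdf_symm ha hα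
  unfold errRate
  have e1 : 2 + α - 1 = 1 + α := by ring
  have e2 : 2 + α - a = b := by rw [hb]
  have e3 : 2 + α - b = a := by rw [hb]; ring
  have e4 : 2 + α - (1 + α) = 1 := by ring
  have t1 : (∫ w in a..1,
        (∫ x : ℝ, (((fun y => -Ψ (2 + α - y)) (w + x) + 1) / 2) * gaussPdf s x) * trapPdf a α b w)
      = ∫ w in (1 + α)..b, (∫ x : ℝ, ((1 - Ψ (w + x)) / 2) * gaussPdf s x) * trapPdf a α b w := by
    have h2 : ∀ w, (∫ x : ℝ, ((-Ψ (2 + α - (w + x)) + 1) / 2) * gaussPdf s x)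
        = ∫ x : ℝ, ((1 - Ψ ((2 + α - w) + x)) / 2) * gaussPdf s x := by
      intro w
      rw [← integral_neg_eq_self (fun x => ((1 - Ψ ((2 + α - w) + x)) / 2) * gaussPdf s x)]
      refine integral_congr_ae (Filter.Eventually.of_forall fun x => ?_)
      simp only
      rw [gaussPdf_neg]
      have harg : 2 + α - (w + x) = 2 + α - w + -x := by ring
      rw [harg]; ring
    calc (∫ w in a..1,
          (∫ x : ℝ, (((fun y => -Ψ (2 + α - y)) (w + x) + 1) / 2) * gaussPdf s x) * trapPdf a α b w)
        = ∫ w in a..1, (fun v => (∫ x : ℝ, ((1 - Ψ (v + x)) / 2) * gaussPdf s x) *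
            trapPdf a α b v) (2 + α - w) := by
          refine intervalIntegral.integral_congr fun w _ => ?_
          simp only
          rw [← h2 w, hsym w]
      _ = ∫ v in (2 + α - 1)..(2 + α - a), (∫ x : ℝ, ((1 - Ψ (v + x)) / 2) * gaussPdf s x) *
            trapPdf a α b v :=
          intervalIntegral.integral_comp_sub_left
            (fun v => (∫ x : ℝ, ((1 - Ψ (v + x)) / 2) * gaussPdf s x) * trapPdf a α b v) (2 + α)
      _ = _ := by rw [e1, e2]
  have t2 : (∫ w in (1 + α)..b,
        (∫ x : ℝ, ((1 - (fun y => -Ψ (2 + α - y)) (w + x)) / 2) * gaussPdf s x) * trapPdf a α b w)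
      = ∫ w in a..1, (∫ x : ℝ, ((Ψ (w + x) + 1) / 2) * gaussPdf s x) * trapPdf a α b w := by
    have h2 : ∀ w, (∫ x : ℝ, ((1 - -Ψ (2 + α - (w + x))) / 2) * gaussPdf s x)
        = ∫ x : ℝ, ((Ψ ((2 + α - w) + x) + 1) / 2) * gaussPdf s x := by
      intro w
      rw [← integral_neg_eq_self (fun x => ((Ψ ((2 + α - w) + x) + 1) / 2) * gaussPdf s x)]
      refine integral_congr_ae (Filter.Eventually.of_forall fun x => ?_)
      simp only
      rw [gaussPdf_neg]
      have harg : 2 + α - (w + x) = 2 + α - w + -x := by ring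
      rw [harg]; ring
    calc (∫ w in (1 + α)..b,
          (∫ x : ℝ, ((1 - (fun y => -Ψ (2 + α - y)) (w + x)) / 2) * gaussPdf s x) * trapPdf a α b w)
        = ∫ w in (1 + α)..b, (fun v => (∫ x : ℝ, ((Ψ (v + x) + 1) / 2) * gaussPdf s x) *
            trapPdf a α b v) (2 + α - w) := by
          refine intervalIntegral.integral_congr fun w _ => ?_
          simp only
          rw [← h2 w, hsym w]
      _ = ∫ v in (2 + α - b)..(2 + α - (1 + α)), (∫ x : ℝ, ((Ψ (v + x) + 1) / 2) * gaussPdf s x) *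
            trapPdf a α b v :=
          intervalIntegral.integral_comp_sub_left
            (fun v => (∫ x : ℝ, ((Ψ (v + x) + 1) / 2) * gaussPdf s x) * trapPdf a α b v) (2 + α)
      _ = _ := by rw [e3, e4]
  rw [t1, t2, add_comm]

lemma ramp1 (α c δ σT : ℝ) (hα : α ∈ Set.Ioo (0:ℝ) 1) (hc : c ∈ Set.Ioc (0:ℝ) (1/100))
    (hδ : δ ∈ Set.Ioc (0:ℝ) (Real.exp (-10000)))
    (hσ : 0 < σT) (hbound : c * σT ≤ α / Real.sqrt (Real.log (1/δ)))
    (Ψ : ℝ → ℝ) (hΨm : Measurable Ψ) (hΨr : ∀ y, Ψ y ∈ Set.Icc (-1:ℝ) 1)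
    (herr : errRate (1 - 10*α/c) α (1 + α + 10*α/c) (c*σT) Ψ ≤ δ)
    (x : ℝ) (hxl : 0 ≤ x) (hxu : x ≤ α) :
    (∫ w in (1 - 10*α/c + x)..(1-x), Ψ w) ≤ -0.1 * (1 - (1 - 10*α/c)) := by
  obtain ⟨hα0, hα1⟩ := hα
  obtain ⟨hc0, hc1⟩ := hc
  obtain ⟨hδ0, hδ1⟩ := hδ
  set s := c * σT with hsdef
  have hs : 0 < s := mul_pos hc0 hσ
  set D := 10 * α / c with hDdef
  have hD0 : 0 < D := by rw [hDdef]; exact div_pos (by linarith) hc0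
  set a := 1 - 10 * α / c with hadef
  set b := 1 + α + 10 * α / c with hbdef
  have h1a : 1 - a = D := by rw [hadef, hDdef]; ring
  have h10c : 0 < 10 * α / c := div_pos (by linarith) hc0
  have ha1 : a < 1 := by rw [hadef]; linarith
  have hb1 : 1 + α < b := by rw [hbdef]; linarith
  have hba : b - a + α = 2 * α + 2 * D := by rw [hbdef, hadef, hDdef]; ring
  -- numeric facts
  have hαD : 1000 * α ≤ D := by
    rw [hDdef, le_div_iff₀ hc0]; nlinarith
  have hδsmall : δ ≤ 1/10000 := by
    have h := Real.add_one_le_exp (10000:ℝ)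
    have h2 : (10000:ℝ) ≤ Real.exp 10000 := by linarith
    have h3 : Real.exp (-10000) ≤ 1/10000 := by
      rw [Real.exp_neg]
      rw [inv_le_comm₀ (Real.exp_pos _) (by norm_num)]
      calc (1/10000:ℝ)⁻¹ = 10000 := by norm_num
        _ ≤ Real.exp 10000 := h2
    linarith
  have hsα : s ≤ α / 100 := by
    have h1δ : Real.exp 10000 ≤ 1/δ := by
      have h := one_div_le_one_div_of_le hδ0 hδ1
      rwa [Real.exp_neg, one_div, inv_inv] at h
    have hlog : (10000:ℝ) ≤ Real.log (1/δ) := by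
      calc (10000:ℝ) = Real.log (Real.exp 10000) := (Real.log_exp _).symm
        _ ≤ Real.log (1/δ) := Real.log_le_log (Real.exp_pos _) h1δ
    have hsqrt100 : (100:ℝ) ≤ Real.sqrt (Real.log (1/δ)) := by
      rw [show (100:ℝ) = Real.sqrt 10000 by
        rw [show (10000:ℝ) = 100^2 by norm_num, Real.sqrt_sq (by norm_num)]]
      exact Real.sqrt_le_sqrt hlog
    calc s ≤ α / Real.sqrt (Real.log (1/δ)) := hbound
      _ ≤ α / 100 := div_le_div_of_nonneg_left hα0.le (by norm_num) hsqrt100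
  -- the normalized response g
  set g : ℝ → ℝ := fun y => (Ψ y + 1) / 2 with hgdef
  have hg0 : ∀ y, 0 ≤ g y := fun y => by
    have := (hΨr y).1; rw [hgdef]; simp only; linarith
  have hg1 : ∀ y, g y ≤ 1 := fun y => by
    have := (hΨr y).2; rw [hgdef]; simp only; linarith
  have hgm : Measurable g := (hΨm.add_const 1).div_const 2
  have hgabs : ∀ y, |g y| ≤ 1 := fun y => abs_le.2 ⟨by linarith [hg0 y], hg1 y⟩
  have hII : ∀ p q : ℝ, IntervalIntegrable g volume p q :=
    fun p q => intervalIntegrable_of_bdd hgm hgabs p q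
  -- smoothed response bounds
  set B := ∫ x, gaussPdf s x with hBdef
  have hPm : Measurable (fun w => ∫ x, g (w + x) * gaussPdf s x) := measurable_smoothed hgm s
  have hP0 : ∀ w, 0 ≤ ∫ x, g (w + x) * gaussPdf s x := smoothed_nonneg hg0 hs
  have hPB : ∀ w, |∫ x, g (w + x) * gaussPdf s x| ≤ B := fun w => by
    rw [abs_of_nonneg (hP0 w)]; exact smoothed_le hgm hg0 hg1 hs w
  have hB0 : 0 ≤ B := le_trans (abs_nonneg _) (hPB 0)
  -- error term decomposition
  set C := 2 / (b - a + α) with hCdef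
  have hC0 : 0 < C := by rw [hCdef, hba]; exact div_pos (by norm_num) (by linarith)
  have htrap0 : ∀ w, 0 ≤ trapPdf a α b w := trapPdf_nonneg ha1 hα0 hb1
  have htrapC : ∀ w, trapPdf a α b w ≤ C := trapPdf_le ha1 hα0 hb1
  have hPtrapII : ∀ p q : ℝ,
      IntervalIntegrable (fun w => (∫ x, g (w + x) * gaussPdf s x) * trapPdf a α b w)
        volume p q := by
    intro p q
    apply intervalIntegrable_of_bdd (hPm.mul (trapPdf_measurable a α b)) (M := B * C)
    intro w
    simp only [Pi.mul_apply]
    rw [abs_mul]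
    exact mul_le_mul (hPB w) (by rw [abs_of_nonneg (htrap0 w)]; exact htrapC w)
      (abs_nonneg _) hB0
  have hterm2 : 0 ≤ ∫ w in (1+α)..b,
      (∫ x : ℝ, ((1 - Ψ (w + x)) / 2) * gaussPdf s x) * trapPdf a α b w := by
    apply intervalIntegral.integral_nonneg (by linarith)
    intro u _
    apply mul_nonneg _ (htrap0 u)
    apply integral_nonneg
    intro x
    apply mul_nonneg _ (gaussPdf_nonneg hs x)
    have := (hΨr (u + x)).2
    linarith
  have herr_eq : errRate a α b s Ψ =
      (∫ w in a..1, (∫ x, g (w + x) * gaussPdf s x) * trapPdf a α b w) +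
      (∫ w in (1+α)..b, (∫ x : ℝ, ((1 - Ψ (w + x)) / 2) * gaussPdf s x) * trapPdf a α b w) := rfl
  have hterm1 : (∫ w in a..1, (∫ x, g (w + x) * gaussPdf s x) * trapPdf a α b w) ≤ δ := by
    have h := herr
    rw [herr_eq] at h
    linarith
  -- interval decomposition
  set m1 := a + D/8 with hm1def
  set m2 := 1 - x - s with hm2def
  have hax_m1 : a + x ≤ m1 := by rw [hm1def]; linarith [hsα]
  have hm1_m2 : m1 ≤ m2 := by rw [hm1def, hm2def]; have := h1a; linarith [hsα]
  have hm2_1x : m2 ≤ 1 - x := by rw [hm2def]; linarith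
  have hsplit : (∫ w in (a+x)..(1-x), g w) =
      (∫ w in (a+x)..m1, g w) + (∫ w in m1..m2, g w) + (∫ w in m2..(1-x), g w) := by
    have h23 := intervalIntegral.integral_add_adjacent_intervals (hII m1 m2) (hII m2 (1-x))
    have h12 := intervalIntegral.integral_add_adjacent_intervals (hII (a+x) m1) (hII m1 (1-x))
    linarith
  have hchunk1 : (∫ w in (a+x)..m1, g w) ≤ m1 - (a+x) := by
    calc (∫ w in (a+x)..m1, g w) ≤ ∫ _ in (a+x)..m1, (1:ℝ) :=
          intervalIntegral.integral_mono_on hax_m1 (hII _ _) intervalIntegrable_const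
            (fun u _ => hg1 u)
      _ = m1 - (a+x) := by simp
  have hchunk3 : (∫ w in m2..(1-x), g w) ≤ (1-x) - m2 := by
    calc (∫ w in m2..(1-x), g w) ≤ ∫ _ in m2..(1-x), (1:ℝ) :=
          intervalIntegral.integral_mono_on hm2_1x (hII _ _) intervalIntegrable_const
            (fun u _ => hg1 u)
      _ = (1-x) - m2 := by simp
  -- main chunk via smoothing
  have hkey := key_smooth hgm hg0 hg1 hs hm1_m2
  have hm2s : m2 + s = 1 - x := by rw [hm2def]; ring
  rw [hm2s] at hkey
  -- bound the integral of the smoothed response over J = [m1 - s, 1 - x]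
  have hJ1 : a ≤ m1 - s := by rw [hm1def]; linarith [hsα, hαD]
  have hJ2 : m1 - s ≤ 1 - x := by linarith
  have hJ3 : (1:ℝ) - x ≤ 1 := by linarith
  have htraplow : ∀ w ∈ Set.Icc (m1 - s) (1 - x), C / 16 ≤ trapPdf a α b w := by
    intro w hw
    have hw1 : a ≤ w := le_trans hJ1 hw.1
    have hw2 : w ≤ 1 := le_trans hw.2 hJ3
    have hwa : D / 16 ≤ w - a := by
      have : a + D/16 ≤ m1 - s := by rw [hm1def]; linarith [hsα, hαD]
      linarith [le_trans this hw.1]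
    rw [trapPdf_ramp1 hw1 hw2, h1a, ← hCdef]
    rw [div_le_div_iff₀ (by norm_num) hD0]
    nlinarith [mul_le_mul_of_nonneg_left hwa hC0.le]
  have hmono1 : (∫ w in (m1-s)..(1-x), (C/16) * (∫ x, g (w + x) * gaussPdf s x)) ≤
      ∫ w in (m1-s)..(1-x), (∫ x, g (w + x) * gaussPdf s x) * trapPdf a α b w := by
    apply intervalIntegral.integral_mono_on hJ2
    · apply intervalIntegrable_of_bdd (measurable_const.mul hPm) (M := (C/16) * B)
      intro w
      simp only [Pi.mul_apply]
      rw [abs_mul, abs_of_nonneg (div_pos hC0 (by norm_num)).le]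
      exact mul_le_mul_of_nonneg_left (hPB w) (div_pos hC0 (by norm_num)).le
    · exact hPtrapII _ _
    · intro w hw
      calc (C/16) * (∫ x, g (w + x) * gaussPdf s x)
          = (∫ x, g (w + x) * gaussPdf s x) * (C/16) := by ring
        _ ≤ (∫ x, g (w + x) * gaussPdf s x) * trapPdf a α b w :=
            mul_le_mul_of_nonneg_left (htraplow w hw) (hP0 w)
  have hmono2 : (∫ w in (m1-s)..(1-x), (∫ x, g (w + x) * gaussPdf s x) * trapPdf a α b w) ≤
      ∫ w in a..1, (∫ x, g (w + x) * gaussPdf s x) * trapPdf a α b w := by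
    apply intervalIntegral.integral_mono_interval hJ1 hJ2 hJ3
    · exact ae_of_all _ fun w => mul_nonneg (hP0 w) (htrap0 w)
    · exact hPtrapII a 1
  have hconst : (∫ w in (m1-s)..(1-x), (C/16) * (∫ x, g (w + x) * gaussPdf s x))
      = (C/16) * ∫ w in (m1-s)..(1-x), (∫ x, g (w + x) * gaussPdf s x) :=
    intervalIntegral.integral_const_mul _ _
  have hJP : (∫ w in (m1-s)..(1-x), (∫ x, g (w + x) * gaussPdf s x)) ≤ 16 * (δ * (α + D)) := by
    have h1 : (C/16) * (∫ w in (m1-s)..(1-x), (∫ x, g (w + x) * gaussPdf s x)) ≤ δ := by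
      rw [← hconst]
      exact le_trans hmono1 (le_trans hmono2 hterm1)
    have hCval : C = 1 / (α + D) := by
      rw [hCdef, hba]
      rw [div_eq_div_iff (by linarith) (by linarith)]
      ring
    rw [hCval] at h1
    have hAD : (0:ℝ) < α + D := by linarith
    have hre : (16 * (α + D)) * ((1/(α+D)/16) *
        (∫ w in (m1-s)..(1-x), (∫ x, g (w + x) * gaussPdf s x)))
        = ∫ w in (m1-s)..(1-x), (∫ x, g (w + x) * gaussPdf s x) := by
      field_simp
    calc (∫ w in (m1-s)..(1-x), (∫ x, g (w + x) * gaussPdf s x))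
        = (16 * (α + D)) * ((1/(α+D)/16) *
            (∫ w in (m1-s)..(1-x), (∫ x, g (w + x) * gaussPdf s x))) := hre.symm
      _ ≤ (16 * (α + D)) * δ := mul_le_mul_of_nonneg_left h1 (by linarith)
      _ = 16 * (δ * (α + D)) := by ring
  have hgmid0 : 0 ≤ ∫ w in m1..m2, g w :=
    intervalIntegral.integral_nonneg hm1_m2 fun u _ => hg0 u
  have hchunk2 : (∫ w in m1..m2, g w) ≤ 54 * (δ * (α + D)) := by
    have hL := gauss_lower hs
    have h2 : (3/10:ℝ) * (∫ w in m1..m2, g w) ≤ 16 * (δ * (α + D)) := by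
      calc (3/10:ℝ) * (∫ w in m1..m2, g w)
          ≤ (∫ u in (-s)..s, gaussPdf s u) * (∫ w in m1..m2, g w) :=
            mul_le_mul_of_nonneg_right hL hgmid0
        _ ≤ ∫ w in (m1-s)..(1-x), (∫ x, g (w + x) * gaussPdf s x) := hkey
        _ ≤ 16 * (δ * (α + D)) := hJP
    linarith
  have hδprod : δ * (α + D) ≤ (1/10000) * (2*D) := by
    apply mul_le_mul hδsmall (by linarith) (by linarith) (by norm_num)
  -- convert back to Ψ
  have hΨint : (∫ w in (a+x)..(1-x), Ψ w) =
      2 * (∫ w in (a+x)..(1-x), g w) - ((1-x) - (a+x)) := by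
    have hcongr : (∫ w in (a+x)..(1-x), Ψ w) = ∫ w in (a+x)..(1-x), (2 * g w - 1) := by
      refine intervalIntegral.integral_congr fun w _ => ?_
      rw [hgdef]; simp only; ring
    rw [hcongr]
    rw [intervalIntegral.integral_sub ((hII _ _).const_mul 2) intervalIntegrable_const]
    rw [intervalIntegral.integral_const_mul]
    simp
  rw [hΨint, h1a]
  have hItot : (∫ w in (a+x)..(1-x), g w) ≤ (m1 - (a+x)) + 54 * (δ * (α + D)) + ((1-x) - m2) := by
    rw [hsplit]; linarith
  have hm1v : m1 - (a + x) = D/8 - x := by rw [hm1def]; ring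
  have hm2v : (1 - x) - m2 = s := by rw [hm2def]; ring
  rw [hm1v] at hItot
  rw [hm2v] at hItot
  linarith [hsα, hαD, hδprod, hItot]

end Aux

/-- An accurate responder is predominantly `−1` on the rising ramp and predominantly `+1`
on the falling ramp: there exist universal constants `c₀ ∈ (0,1)` and `δ₀ ∈ (0, 0.05]`
such that for `α ∈ (0,1)`, `c ∈ (0,c₀]`, `δ ∈ (0,δ₀]`, `σ_T > 0` with
`c·σ_T ≤ α/√(ln(1/δ))`, setting `a = 1−10α/c`, `b = 1+α+10α/c`, `s = c·σ_T`:
every measurable `Ψ : ℝ → [−1,1]` with `Err_s(Ψ) ≤ δ` satisfies, for every `x ∈ [0,α]`,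
`∫_{a+x}^{1−x} Ψ ≤ −0.1·(1−a)` and `∫_{1+α+x}^{b−x} Ψ ≥ 0.1·(b−(1+α))`. -/
theorem low_error_responder_ramp_behavior :
    ∃ c₀ δ₀ : ℝ, c₀ ∈ Set.Ioo (0 : ℝ) 1 ∧ δ₀ ∈ Set.Ioc (0 : ℝ) 0.05 ∧
      ∀ (α c δ σT : ℝ),
        α ∈ Set.Ioo (0 : ℝ) 1 → c ∈ Set.Ioc (0 : ℝ) c₀ → δ ∈ Set.Ioc (0 : ℝ) δ₀ →
        0 < σT → c * σT ≤ α / Real.sqrt (Real.log (1 / δ)) →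
        ∀ Ψ : ℝ → ℝ, Measurable Ψ → (∀ y, Ψ y ∈ Set.Icc (-1 : ℝ) 1) →
          errRate (1 - 10 * α / c) α (1 + α + 10 * α / c) (c * σT) Ψ ≤ δ →
          ∀ x ∈ Set.Icc (0 : ℝ) α,
            (∫ w in (1 - 10 * α / c + x)..(1 - x), Ψ w) ≤
                -0.1 * (1 - (1 - 10 * α / c)) ∧
            0.1 * ((1 + α + 10 * α / c) - (1 + α)) ≤
                (∫ w in (1 + α + x)..(1 + α + 10 * α / c - x), Ψ w) := by

  refine ⟨1/100, Real.exp (-10000), ⟨by norm_num, by norm_num⟩, ⟨Real.exp_pos _, ?_⟩, ?_⟩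
  · have h := Real.add_one_le_exp (10000:ℝ)
    have h20 : (20:ℝ) ≤ Real.exp 10000 := by linarith
    rw [Real.exp_neg]
    calc (Real.exp 10000)⁻¹ ≤ (20:ℝ)⁻¹ := inv_anti₀ (by norm_num) h20
      _ ≤ 0.05 := by norm_num
  · intro α c δ σT hα hc hδ hσ hbound Ψ hΨm hΨr herr x hx
    constructor
    · exact ramp1 α c δ σT hα hc hδ hσ hbound Ψ hΨm hΨr herr x hx.1 hx.2
    · set Ψ' : ℝ → ℝ := fun y => -Ψ (2 + α - y) with hΨ'def
      have hm : Measurable Ψ' := (hΨm.comp (measurable_const.sub measurable_id)).neg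
      have hr : ∀ y, Ψ' y ∈ Set.Icc (-1:ℝ) 1 := by
        intro y
        have h1 := (hΨr (2 + α - y)).1
        have h2 := (hΨr (2 + α - y)).2
        rw [hΨ'def]
        simp only [Set.mem_Icc]
        constructor <;> linarith
      have hα0 := hα.1
      have hc0 := hc.1
      have ha1 : (1 - 10 * α / c) < 1 := by
        have h : 0 < 10 * α / c := by positivity
        linarith
      have hbeq : (1 + α + 10 * α / c) = 2 + α - (1 - 10 * α / c) := by ring
      have herr' : errRate (1 - 10 * α / c) α (1 + α + 10 * α / c) (c * σT) Ψ' ≤ δ := by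
        rw [hΨ'def, errRate_symm ha1 hα0 hbeq Ψ]
        exact herr
      have hres := ramp1 α c δ σT hα hc hδ hσ hbound Ψ' hm hr herr' x hx.1 hx.2
      have htrans : (∫ w in (1 - 10 * α / c + x)..(1 - x), Ψ' w)
          = - ∫ w in (1 + α + x)..(1 + α + 10 * α / c - x), Ψ w := by
        calc (∫ w in (1 - 10 * α / c + x)..(1 - x), Ψ' w)
            = ∫ w in (1 - 10 * α / c + x)..(1 - x), (fun v => -Ψ v) (2 + α - w) := rfl
          _ = ∫ v in (2 + α - (1 - x))..(2 + α - (1 - 10 * α / c + x)), -Ψ v :=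
              intervalIntegral.integral_comp_sub_left (fun v => -Ψ v) (2 + α)
          _ = ∫ v in (1 + α + x)..(1 + α + 10 * α / c - x), -Ψ v := by
              rw [show 2 + α - (1 - x) = 1 + α + x by ring,
                show 2 + α - (1 - 10 * α / c + x) = 1 + α + 10 * α / c - x by ring]
          _ = - ∫ v in (1 + α + x)..(1 + α + 10 * α / c - x), Ψ v :=
              intervalIntegral.integral_neg
      rw [htrans] at hres
      have heq : (0.1:ℝ) * ((1 + α + 10 * α / c) - (1 + α)) = 0.1 * (1 - (1 - 10 * α / c)) := by
        ring
      rw [heq]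
      linarith [hres]
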